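/- arXiv:1301.2892 — 2 statements merged into one kernel-verified Lean document; each statement's English description precedes it below -/
import Mathlib

section
/- Let m ≥ 1, n ≥ 2 and let (a,u), (b,v) ∈ G = ℤ^m × F_n. There exists an injective endomorphism Ψ of G with Ψ(a,u) = (b,v) if and only if both of the following hold: (1) there exists an injective endomorphism φ of F_n with φ(u) = v, and (2) there exist an m×m integer matrix Q with det(Q) ≠ 0 and an n×m integer matrix P with aQ + ūP = b. -/
open Matrix

/-- The abelianization vector (vector of exponent sums of the generators)
of an element of the free group `F_n`. -/
def abVec {n : ℕ} (u : FreeGroup (Fin n)) : Fin n → ℤ :=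
  Multiplicative.toAdd ((FreeGroup.lift fun i => Multiplicative.ofAdd (Pi.single i (1 : ℤ))) u)

/-- The free-abelian times free group `G = ℤ^m × F_n`. -/
abbrev GFab (m n : ℕ) := Multiplicative (Fin m → ℤ) × FreeGroup (Fin n)

/-!
An injective endomorphism `Ψ` of `ℤ^m × F_n` is triangular. Commutation is transitive on the
nontrivial elements of a free group: the centralizer of `c ≠ 1` is free by Nielsen–Schreier and has
`c` in its center, so it is abelian, free groups of rank at least two having trivial center. Hence
the `F_n`-component of `Ψ (z, 1)`, which commutes with the non-abelian image of `F_n`, is trivial,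
and `Ψ (z, w) = (α z · χ w, φ w)` with `α` and `φ` injective. Now `α` is `z ↦ z Q` with
`det Q ≠ 0` and `χ` factors through the abelianization as `w ↦ w̄ P`. Conversely, every such
triangular map is an injective endomorphism.
-/

namespace FreeGroup

variable {α : Type*}

theorem mk_singleton_mem_zpowers (i : α) (b : Bool) :
    mk [(i, b)] ∈ Subgroup.zpowers (of i) := by
  cases b
  · exact Subgroup.inv_mem _ (Subgroup.mem_zpowers (of i))
  · exact Subgroup.mem_zpowers (of i)

section DecidableEq

variable [DecidableEq α]

theorem toWord_of_mul {i : α} {w : FreeGroup α} (h : ∀ x ∈ w.toWord.head?, x.1 ≠ i) :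
    (of i * w).toWord = (i, true) :: w.toWord := by
  rw [toWord_mul, toWord_of, List.singleton_append]
  refine IsReduced.reduce_eq (List.isChain_cons.mpr ⟨fun x hx hi => ?_, isReduced_toWord⟩)
  exact absurd hi.symm (h x hx)

theorem toWord_mul_of {i : α} {w : FreeGroup α} (h : ∀ x ∈ w.toWord.getLast?, x.1 ≠ i) :
    (w * of i).toWord = w.toWord ++ [(i, true)] := by
  rw [toWord_mul, toWord_of]
  refine IsReduced.reduce_eq (List.isChain_append.mpr
    ⟨isReduced_toWord, .singleton _, fun x hx y hy hi => ?_⟩)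
  simp only [List.head?_cons, Option.mem_def, Option.some.injEq] at hy
  subst hy
  exact absurd hi (h x hx)

theorem not_commute_of_of_ne {i j : α} (hij : i ≠ j) : ¬Commute (of i) (of j) := by
  intro h
  have hword := congrArg toWord h.eq
  rw [toWord_mul_of (by simpa [toWord_of] using hij),
    toWord_of_mul (by simpa [toWord_of] using hij)] at hword
  simp only [toWord_of, List.cons_append, List.nil_append, List.cons.injEq, Prod.mk.injEq,
    and_true] at hword
  exact hij hword.1

theorem exists_toWord_eq_cons_or_append_of_commute_of {i : α} {w : FreeGroup α}
    (hw : Commute w (of i)) (hw1 : w ≠ 1) :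
    (∃ b T, w.toWord = (i, b) :: T) ∨ ∃ b T, w.toWord = T ++ [(i, b)] := by
  by_contra! ⟨hhead, hlast⟩
  have hhead' : ∀ x ∈ w.toWord.head?, x.1 ≠ i := fun ⟨j, b⟩ hx hj =>
    (List.head?_eq_some_iff.mp hx).elim fun T h => hhead b T (hj ▸ h)
  have hlast' : ∀ x ∈ w.toWord.getLast?, x.1 ≠ i := fun ⟨j, b⟩ hx hj =>
    (List.getLast?_eq_some_iff.mp hx).elim fun T h => hlast b T (hj ▸ h)
  -- the reduced word of `of i * w` starts with `i`, that of `w * of i` with the first letter of `w`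
  have hword := congrArg toWord hw.eq
  rw [toWord_mul_of hlast', toWord_of_mul hhead'] at hword
  rcases hL : w.toWord with _ | ⟨x, T⟩
  · exact hw1 (toWord_eq_nil_iff.mp hL)
  · rw [hL, List.cons_append, List.cons.injEq] at hword
    exact hhead' x (by simp [hL]) (congrArg Prod.fst hword.1)

theorem centralizer_of_le_zpowers (i : α) :
    Subgroup.centralizer {of i} ≤ Subgroup.zpowers (of i) := by
  intro w hw
  induction hN : w.toWord.length using Nat.strong_induction_on generalizing w with
  | _ N ih =>
  have hzc : Subgroup.zpowers (of i) ≤ Subgroup.centralizer {of i} :=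
    Subgroup.zpowers_le.mpr (Subgroup.mem_centralizer_singleton_iff.mpr rfl)
  have hshorter {T : List (α × Bool)} (hT : T <:+: w.toWord) (hlen : T.length < N)
      (hTc : mk T ∈ Subgroup.centralizer {of i}) : mk T ∈ Subgroup.zpowers (of i) :=
    ih _ hlen hTc (by rw [toWord_mk, (isReduced_toWord.infix hT).reduce_eq])
  by_cases hw1 : w = 1
  · exact hw1 ▸ Subgroup.one_mem _
  rcases exists_toWord_eq_cons_or_append_of_commute_of
    (Subgroup.mem_centralizer_singleton_iff.mp hw) hw1 with ⟨b, T, hT⟩ | ⟨b, T, hT⟩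
  · have hw' : w = mk [(i, b)] * mk T := by rw [mul_mk, List.singleton_append, ← hT, mk_toWord]
    have hTc : mk T ∈ Subgroup.centralizer {of i} := by
      rw [show mk T = (mk [(i, b)])⁻¹ * w by rw [hw']; group]
      exact mul_mem (inv_mem (hzc (mk_singleton_mem_zpowers i b))) hw
    rw [hw']
    exact mul_mem (mk_singleton_mem_zpowers i b)
      (hshorter ⟨[(i, b)], [], by simp [hT]⟩ (by simp [← hN, hT]) hTc)
  · have hw' : w = mk T * mk [(i, b)] := by rw [mul_mk, ← hT, mk_toWord]
    have hTc : mk T ∈ Subgroup.centralizer {of i} := by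
      rw [show mk T = w * (mk [(i, b)])⁻¹ by rw [hw']; group]
      exact mul_mem hw (inv_mem (hzc (mk_singleton_mem_zpowers i b)))
    rw [hw']
    exact mul_mem (hshorter ⟨[], [(i, b)], by simp [hT]⟩ (by simp [← hN, hT]) hTc)
      (mk_singleton_mem_zpowers i b)

end DecidableEq

theorem center_eq_bot [Nontrivial α] : Subgroup.center (FreeGroup α) = ⊥ := by
  classical
  obtain ⟨i, j, hij⟩ := exists_pair_ne α
  refine (Subgroup.eq_bot_iff_forall _).mpr fun z hz => ?_
  have hmem (k : α) : z ∈ Subgroup.zpowers (of k) :=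
    centralizer_of_le_zpowers k (Subgroup.center_le_centralizer _ hz)
  let χ : FreeGroup α →* Multiplicative ℤ := lift (Pi.mulSingle i (Multiplicative.ofAdd 1))
  obtain ⟨k, rfl⟩ := Subgroup.mem_zpowers_iff.mp (hmem i)
  obtain ⟨l, hl⟩ := Subgroup.mem_zpowers_iff.mp (hmem j)
  have hχ := congrArg χ hl
  simp only [χ, map_zpow, lift_apply_of, Pi.mulSingle_eq_same, Pi.mulSingle_eq_of_ne hij.symm,
    _root_.one_zpow, ← ofAdd_zsmul, smul_eq_mul, mul_one] at hχ
  rw [show k = 0 from (congrArg Multiplicative.toAdd hχ).symm, zpow_zero]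

theorem commute_of_subsingleton [Subsingleton α] (x y : FreeGroup α) : Commute x y := by
  have hcl := Subgroup.closure_le_centralizer_centralizer (Set.range (of : α → FreeGroup α))
  rw [closure_range_of] at hcl
  refine Set.centralizer_centralizer_comm_of_comm ?_ x (hcl trivial) y (hcl trivial)
  rintro _ ⟨a, rfl⟩ _ ⟨b, rfl⟩
  rw [Subsingleton.elim a b]

end FreeGroup

namespace IsFreeGroup

variable {G : Type*} [Group G] [IsFreeGroup G]

theorem commute_of_mem_center {c : G} (hc : c ≠ 1) (hcen : c ∈ Subgroup.center G) (a b : G) :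
    Commute a b := by
  let e := toFreeGroup G
  refine Commute.of_map e.injective ?_
  rcases subsingleton_or_nontrivial (Generators G) with _ | _
  · exact FreeGroup.commute_of_subsingleton _ _
  · have hec : e c ∈ Subgroup.center (FreeGroup (Generators G)) :=
      MulEquivClass.apply_mem_center e hcen
    rw [FreeGroup.center_eq_bot, Subgroup.mem_bot, map_eq_one_iff e e.injective] at hec
    exact absurd hec hc

theorem commute_trans {a b c : G} (hc : c ≠ 1) (hac : Commute a c) (hcb : Commute c b) :
    Commute a b := by
  -- the centralizer of `c` is free by Nielsen–Schreier
  let H := Subgroup.centralizer {c}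
  have hmem {x : G} (hx : Commute x c) : x ∈ H := Subgroup.mem_centralizer_singleton_iff.mpr hx.eq
  have hcen : (⟨c, hmem (.refl c)⟩ : H) ∈ Subgroup.center H :=
    Subgroup.mem_center_iff.mpr fun x =>
      Subtype.ext (Subgroup.mem_centralizer_singleton_iff.mp x.2)
  have hc' : (⟨c, hmem (.refl c)⟩ : H) ≠ 1 := fun h => hc (congrArg Subtype.val h)
  exact (commute_of_mem_center hc' hcen ⟨a, hmem hac⟩ ⟨b, hmem hcb.symm⟩).map H.subtype

end IsFreeGroup

section Triangular

variable {A F A' F' : Type*} [Group A] [Group F] [CommGroup A'] [Group F']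

def triangularHom (α : A →* A') (χ : F →* A') (φ : F →* F') : A × F →* A' × F' :=
  (α.comp (MonoidHom.fst A F) * χ.comp (MonoidHom.snd A F)).prod (φ.comp (MonoidHom.snd A F))

@[simp]
theorem triangularHom_apply (α : A →* A') (χ : F →* A') (φ : F →* F') (z : A) (w : F) :
    triangularHom α χ φ (z, w) = (α z * χ w, φ w) :=
  rfl

theorem triangularHom_injective {α : A →* A'} (χ : F →* A') {φ : F →* F'}
    (hα : Function.Injective α) (hφ : Function.Injective φ) :
    Function.Injective (triangularHom α χ φ) := by
  refine (injective_iff_map_eq_one _).mpr fun ⟨z, w⟩ h => ?_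
  simp only [triangularHom_apply, Prod.mk_eq_one] at h
  obtain rfl : w = 1 := (map_eq_one_iff φ hφ).mp h.2
  rw [map_one, mul_one, map_eq_one_iff α hα] at h
  rw [h.1, Prod.mk_one_one]

theorem eq_triangularHom {Ψ : A × F →* A' × F'} (h : ∀ z, (Ψ (z, 1)).2 = 1) :
    Ψ = triangularHom ((MonoidHom.fst A' F').comp (Ψ.comp (MonoidHom.inl A F)))
      ((MonoidHom.fst A' F').comp (Ψ.comp (MonoidHom.inr A F)))
      ((MonoidHom.snd A' F').comp (Ψ.comp (MonoidHom.inr A F))) := by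
  ext ⟨z, w⟩ : 1
  have hzw : Ψ (z, w) = Ψ (z, 1) * Ψ (1, w) := by rw [← map_mul, Prod.mk_mul_mk, mul_one, one_mul]
  rw [hzw, Prod.mul_def, h, one_mul]
  rfl

variable {Ψ : A × F →* A' × F'} (hΨ : Function.Injective Ψ)
include hΨ

theorem commute_of_commute_snd_map_inr {x y : F} (h : Commute (Ψ (1, x)).2 (Ψ (1, y)).2) :
    Commute x y :=
  ((Prod.commute_iff.mpr ⟨Commute.all _ _, h⟩).of_map hΨ).map (MonoidHom.snd A F)

variable {x y : F} (hxy : ¬Commute x y)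
include hxy

theorem snd_map_inl_eq_one [IsFreeGroup F'] (z : A) : (Ψ (z, 1)).2 = 1 := by
  have hcomm (w : F) : Commute (Ψ (z, 1)).2 (Ψ (1, w)).2 :=
    ((Prod.commute_iff.mpr ⟨Commute.one_right z, Commute.one_left w⟩).map Ψ).map
      (MonoidHom.snd A' F')
  by_contra hc
  exact hxy (commute_of_commute_snd_map_inr hΨ
    (IsFreeGroup.commute_trans hc (hcomm x).symm (hcomm y)))

theorem injective_snd_comp_inr [IsFreeGroup F] :
    Function.Injective ((MonoidHom.snd A' F').comp (Ψ.comp (MonoidHom.inr A F))) := by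
  refine (injective_iff_map_eq_one _).mpr fun w (hw : (Ψ (1, w)).2 = 1) => ?_
  have hcomm (x : F) : Commute w x :=
    commute_of_commute_snd_map_inr hΨ (hw ▸ Commute.one_left _)
  by_contra hw1
  exact hxy (IsFreeGroup.commute_trans hw1 (hcomm x).symm (hcomm y))

theorem injective_fst_comp_inl [IsFreeGroup F'] :
    Function.Injective ((MonoidHom.fst A' F').comp (Ψ.comp (MonoidHom.inl A F))) := by
  refine (injective_iff_map_eq_one _).mpr fun z hz => ?_
  have h1 : Ψ (z, 1) = 1 := Prod.ext hz (snd_map_inl_eq_one hΨ hxy z)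
  exact congrArg Prod.fst (hΨ (h1.trans (map_one Ψ).symm))

end Triangular

section VecMul

variable {k l : Type*} [Fintype k]

def vecMulHom {R : Type*} [Semiring R] (M : Matrix k l R) :
    Multiplicative (k → R) →* Multiplicative (l → R) :=
  AddMonoidHom.toMultiplicative (vecMulLinear M).toAddMonoidHom

@[simp]
theorem vecMulHom_apply {R : Type*} [Semiring R] (M : Matrix k l R) (x : Multiplicative (k → R)) :
    vecMulHom M x = Multiplicative.ofAdd (x.toAdd ᵥ* M) :=
  rfl

variable [DecidableEq k]

theorem vecMulHom_injective {R : Type*} [CommRing R] [IsDomain R] {Q : Matrix k k R}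
    (hQ : Q.det ≠ 0) : Function.Injective (vecMulHom Q) := by
  refine (injective_iff_map_eq_one _).mpr fun x hx => ?_
  by_contra hx1
  exact hQ (exists_vecMul_eq_zero_iff.mp ⟨x.toAdd, hx1, congrArg Multiplicative.toAdd hx⟩)

theorem exists_det_ne_zero_vecMulHom_eq (α : Multiplicative (k → ℤ) →* Multiplicative (k → ℤ))
    (hα : Function.Injective α) : ∃ Q : Matrix k k ℤ, Q.det ≠ 0 ∧ vecMulHom Q = α := by
  let Q := (LinearMap.toMatrix' (AddMonoidHom.toMultiplicative.symm α).toIntLinearMap)ᵀ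
  have hQ (x : Multiplicative (k → ℤ)) : vecMulHom Q x = α x := by
    rw [vecMulHom_apply, vecMul_transpose, LinearMap.toMatrix'_mulVec]
    rfl
  refine ⟨Q, fun h0 => ?_, MonoidHom.ext hQ⟩
  obtain ⟨v, hv, hvQ⟩ := exists_vecMul_eq_zero_iff.mpr h0
  refine hv (congrArg Multiplicative.toAdd (hα (?_ : α (.ofAdd v) = α 1)))
  rw [← hQ, ← hQ, map_one, vecMulHom_apply, toAdd_ofAdd, hvQ, ofAdd_zero]

end VecMul

def abVecHom {n : ℕ} : FreeGroup (Fin n) →* Multiplicative (Fin n → ℤ) :=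
  FreeGroup.lift fun i => Multiplicative.ofAdd (Pi.single i 1)

theorem exists_eq_vecMulHom_comp_abVecHom {n : ℕ} {k : Type*} [Fintype k]
    (χ : FreeGroup (Fin n) →* Multiplicative (k → ℤ)) :
    ∃ P : Matrix (Fin n) k ℤ, χ = (vecMulHom P).comp abVecHom :=
  ⟨.of fun i => (χ (FreeGroup.of i)).toAdd, FreeGroup.ext_hom _ _ fun i => by
    rw [MonoidHom.comp_apply, abVecHom, FreeGroup.lift_apply_of, vecMulHom_apply, toAdd_ofAdd,
      single_one_vecMul]
    rfl⟩

theorem whitehead_mono_general (m n : ℕ) (hn : 2 ≤ n)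
    (a b : Fin m → ℤ) (u v : FreeGroup (Fin n)) :
    (∃ Ψ : GFab m n →* GFab m n, Function.Injective Ψ ∧
        Ψ (Multiplicative.ofAdd a, u) = (Multiplicative.ofAdd b, v)) ↔
    ((∃ φ : FreeGroup (Fin n) →* FreeGroup (Fin n), Function.Injective φ ∧ φ u = v) ∧
     (∃ (Q : Matrix (Fin m) (Fin m) ℤ) (P : Matrix (Fin n) (Fin m) ℤ),
        Q.det ≠ 0 ∧ a ᵥ* Q + abVec u ᵥ* P = b)) := by
  constructor
  · rintro ⟨Ψ, hΨ, hab⟩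
    have hxy : ¬Commute (FreeGroup.of (⟨0, by omega⟩ : Fin n)) (FreeGroup.of ⟨1, by omega⟩) :=
      FreeGroup.not_commute_of_of_ne (by simp [Fin.ext_iff])
    obtain ⟨Q, hQ, hα⟩ := exists_det_ne_zero_vecMulHom_eq _ (injective_fst_comp_inl hΨ hxy)
    obtain ⟨P, hχ⟩ := exists_eq_vecMulHom_comp_abVecHom
      ((MonoidHom.fst _ _).comp (Ψ.comp (MonoidHom.inr _ _)))
    rw [eq_triangularHom (snd_map_inl_eq_one hΨ hxy), ← hα, hχ, triangularHom_apply,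
      Prod.mk.injEq] at hab
    exact ⟨⟨_, injective_snd_comp_inr hΨ hxy, hab.2⟩, Q, P, hQ, congrArg Multiplicative.toAdd hab.1⟩
  · rintro ⟨⟨φ, hφ, rfl⟩, Q, P, hQ, rfl⟩
    exact ⟨triangularHom (vecMulHom Q) ((vecMulHom P).comp abVecHom) φ,
      triangularHom_injective _ (vecMulHom_injective hQ) hφ, rfl⟩

/-- Whitehead problem characterization for monomorphisms of `ℤ^m × F_n` (m ≥ 1, n ≥ 2):
some injective endomorphism sends `(a,u)` to `(b,v)` iff some injective endomorphism of
`F_n` sends u to v and there exist Q with `det Q ≠ 0` and P with `aQ + ūP = b`. -/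
theorem whitehead_mono (m n : ℕ) (hm : 1 ≤ m) (hn : 2 ≤ n)
    (a b : Fin m → ℤ) (u v : FreeGroup (Fin n)) :
    (∃ Ψ : GFab m n →* GFab m n, Function.Injective Ψ ∧
        Ψ (Multiplicative.ofAdd a, u) = (Multiplicative.ofAdd b, v)) ↔
    ((∃ φ : FreeGroup (Fin n) →* FreeGroup (Fin n), Function.Injective φ ∧ φ u = v) ∧
     (∃ (Q : Matrix (Fin m) (Fin m) ℤ) (P : Matrix (Fin n) (Fin m) ℤ),
        Q.det ≠ 0 ∧ a ᵥ* Q + abVec u ᵥ* P = b)) :=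
  whitehead_mono_general m n hn a b u v
end

section
/- Let a ∈ ℤ^m and u ∈ ℤ^n be nonzero row vectors, let b ∈ ℤ^m, and set α = gcd of the entries of a and μ = gcd of the entries of u. Then there exist a matrix Q ∈ GL(m,ℤ) and an n×m integer matrix P with aQ + uP = b if and only if there exist x, y ∈ ℤ^m with gcd(x₁,…,x_m) = 1 and αx + μy = b. -/
/-!
Write `a = α • g` with `g` primitive. Unimodular matrices preserve the gcd of a vector, so
`x := g Q` is primitive, and every entry of `u P` is divisible by `μ`. Conversely, a primitive
vector `v` admits a functional `φ` with `φ v = 1` (Bézout), so `v` together with a basis of the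
free module `ker φ` is a basis of `ℤ^m`; hence `GL(m,ℤ)` acts transitively on primitive vectors
and some `Q` sends `g` to `x`. Finally `u P = μ • y` for the rank-one matrix `P = c yᵀ`, where
`c ⬝ᵥ u = μ` is a Bézout vector for `u`.
-/

open Matrix

section FreeModule

variable {R M : Type*} [CommRing R] [IsDomain R] [IsPrincipalIdealRing R] [AddCommGroup M]
  [Module R M] [Module.Free R M] [Module.Finite R M]

theorem Module.Basis.exists_fin_succ_zero_eq {v : M} (φ : M →ₗ[R] R) (hv : φ v = 1) :
    ∃ (k : ℕ) (b : Module.Basis (Fin (k + 1)) R M), b 0 = v := by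
  let K := LinearMap.ker φ
  have hli : ∀ (r : R), ∀ x ∈ K, r • v + x = 0 → r = 0 := fun r x hx hrx => by
    simpa [hv, LinearMap.mem_ker.mp hx] using congrArg φ hrx
  have hsp : ∀ z : M, ∃ r : R, z + r • v ∈ K := fun z =>
    ⟨-φ z, by simp [K, hv]⟩
  let bK := (Module.Free.chooseBasis R K).reindex (Fintype.equivFin _)
  exact ⟨_, .mkFinCons v bK hli hsp, by simp⟩

theorem exists_linearEquiv_apply_eq {v w : M} (φ ψ : M →ₗ[R] R) (hv : φ v = 1) (hw : ψ w = 1) :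
    ∃ e : M ≃ₗ[R] M, e v = w := by
  obtain ⟨k, b, rfl⟩ := Module.Basis.exists_fin_succ_zero_eq φ hv
  obtain ⟨l, c, rfl⟩ := Module.Basis.exists_fin_succ_zero_eq ψ hw
  obtain rfl : k = l := by
    simpa using (Module.finrank_eq_card_basis b).symm.trans (Module.finrank_eq_card_basis c)
  exact ⟨b.equiv c (Equiv.refl _), by simp⟩

end FreeModule

section GCD

variable {R ι : Type*} [CommRing R] [NormalizedGCDMonoid R] [Fintype ι]

theorem exists_linearMap_apply_eq_one_of_gcd_eq_one [IsBezout R] {v : ι → R}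
    (hv : Finset.univ.gcd v = 1) : ∃ φ : (ι → R) →ₗ[R] R, φ v = 1 := by
  obtain ⟨c, hc⟩ := Finset.univ.gcd_eq_sum_mul v
  refine ⟨∑ i, c i • LinearMap.proj i, ?_⟩
  simp [← hv, hc, mul_comm]

theorem exists_isUnit_det_vecMul_eq [IsDomain R] [IsPrincipalIdealRing R] [DecidableEq ι]
    {v w : ι → R} (hv : Finset.univ.gcd v = 1) (hw : Finset.univ.gcd w = 1) :
    ∃ Q : Matrix ι ι R, IsUnit Q.det ∧ v ᵥ* Q = w := by
  obtain ⟨φ, hφ⟩ := exists_linearMap_apply_eq_one_of_gcd_eq_one hv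
  obtain ⟨ψ, hψ⟩ := exists_linearMap_apply_eq_one_of_gcd_eq_one hw
  obtain ⟨e, he⟩ := exists_linearEquiv_apply_eq φ ψ hφ hψ
  refine ⟨(LinearMap.toMatrix' e.toLinearMap)ᵀ, ?_, ?_⟩
  · rw [det_transpose, LinearMap.det_toMatrix']
    exact e.isUnit_det'
  · rw [vecMul_transpose, LinearMap.toMatrix'_mulVec, LinearEquiv.coe_coe, he]

theorem gcd_dvd_gcd_vecMul {κ : Type*} [Fintype κ] (v : ι → R) (M : Matrix ι κ R) :
    Finset.univ.gcd v ∣ Finset.univ.gcd (v ᵥ* M) :=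
  Finset.dvd_gcd fun _ _ => Finset.dvd_sum fun i _ =>
    (Finset.gcd_dvd (Finset.mem_univ i)).mul_right _

theorem gcd_vecMul_of_isUnit_det [DecidableEq ι] (v : ι → R) {M : Matrix ι ι R}
    (hM : IsUnit M.det) : Finset.univ.gcd (v ᵥ* M) = Finset.univ.gcd v := by
  refine dvd_antisymm_of_normalize_eq Finset.normalize_gcd Finset.normalize_gcd ?_
    (gcd_dvd_gcd_vecMul v M)
  simpa [vecMul_vecMul, mul_nonsing_inv M hM] using gcd_dvd_gcd_vecMul (v ᵥ* M) M⁻¹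

theorem exists_vecMul_eq_gcd_smul {κ : Type*} [Fintype κ] (v : ι → R) (M : Matrix ι κ R) :
    ∃ y : κ → R, v ᵥ* M = Finset.univ.gcd v • y := by
  have hdvd j : Finset.univ.gcd v ∣ (v ᵥ* M) j :=
    (gcd_dvd_gcd_vecMul v M).trans (Finset.gcd_dvd (Finset.mem_univ j))
  choose y hy using hdvd
  exact ⟨y, funext hy⟩

theorem exists_eq_gcd_smul_of_ne_zero {v : ι → R} (hv : v ≠ 0) :
    ∃ g : ι → R, v = Finset.univ.gcd v • g ∧ Finset.univ.gcd g = 1 := by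
  obtain ⟨i, hi⟩ := Function.ne_iff.mp hv
  obtain ⟨g, hg, hg1⟩ := Finset.univ.extract_gcd v ⟨i, Finset.mem_univ i⟩
  exact ⟨g, funext fun j => hg j (Finset.mem_univ j), hg1⟩

end GCD

theorem matrix_eq_iff_gcd_system_aut_general (m n : ℕ) (a : Fin m → ℤ) (u : Fin n → ℤ)
    (ha : a ≠ 0) (b : Fin m → ℤ) :
    (∃ (Q : Matrix (Fin m) (Fin m) ℤ) (P : Matrix (Fin n) (Fin m) ℤ),
        (Q.det = 1 ∨ Q.det = -1) ∧ a ᵥ* Q + u ᵥ* P = b) ↔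
    (∃ x y : Fin m → ℤ, Finset.univ.gcd x = 1 ∧
        (Finset.univ.gcd a) • x + (Finset.univ.gcd u) • y = b) := by
  obtain ⟨g, hag, hg⟩ := exists_eq_gcd_smul_of_ne_zero ha
  have haQ (Q : Matrix (Fin m) (Fin m) ℤ) : a ᵥ* Q = Finset.univ.gcd a • (g ᵥ* Q) := by
    rw [← smul_vecMul, ← hag]
  simp_rw [← Int.isUnit_iff]
  constructor
  · rintro ⟨Q, P, hQ, rfl⟩
    obtain ⟨y, hy⟩ := exists_vecMul_eq_gcd_smul u P
    exact ⟨g ᵥ* Q, y, by rw [gcd_vecMul_of_isUnit_det g hQ, hg], by rw [haQ, hy]⟩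
  · rintro ⟨x, y, hx, rfl⟩
    obtain ⟨Q, hQ, rfl⟩ := exists_isUnit_det_vecMul_eq hg hx
    obtain ⟨c, hc⟩ := Finset.univ.gcd_eq_sum_mul u
    refine ⟨Q, vecMulVec c y, hQ, ?_⟩
    rw [haQ, vecMul_vecMulVec, hc, dotProduct]

/-- For nonzero `a ∈ ℤ^m`, `u ∈ ℤ^n` and `b ∈ ℤ^m`, with `α = gcd(a)` and `μ = gcd(u)`:
there exist `Q ∈ GL(m,ℤ)` and P (n×m) with `aQ + uP = b` iff the system `αx + μy = b`
has an integer solution with `gcd(x₁,…,x_m) = 1`. -/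
theorem matrix_eq_iff_gcd_system_aut (m n : ℕ) (a : Fin m → ℤ) (u : Fin n → ℤ)
    (ha : a ≠ 0) (hu : u ≠ 0) (b : Fin m → ℤ) :
    (∃ (Q : Matrix (Fin m) (Fin m) ℤ) (P : Matrix (Fin n) (Fin m) ℤ),
        (Q.det = 1 ∨ Q.det = -1) ∧ a ᵥ* Q + u ᵥ* P = b) ↔
    (∃ x y : Fin m → ℤ, Finset.univ.gcd x = 1 ∧
        (Finset.univ.gcd a) • x + (Finset.univ.gcd u) • y = b) :=
  matrix_eq_iff_gcd_system_aut_general m n a u ha b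
end
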